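/- arXiv:2110.11208 — 2 statements merged into one kernel-verified Lean document; each statement's English description precedes it below -/
import Mathlib

section
/- Let α, β ∈ (0, 0.1) and let C be a concept class over a finite domain X. Suppose there exists a learner A (using public randomness) that is m-sample (α, β/3)-accurate (0.9, 1−β/3)-pseudo-globally stable for C. Then for any ε, δ ∈ (0,1), there exists an (ε,δ)-differentially private (α,β)-accurate user-level learner for C in the central model that uses n = ⌈K·log(1/(δβ))/ε⌉ users for a universal constant K, where each user holds m i.i.d. samples. -/
open scoped ENNReal

noncomputable section

def pmfPi {β : Type*} : {n : ℕ} → (Fin n → PMF β) → PMF (Fin n → β)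
  | 0, _ => PMF.pure Fin.elim0
  | _ + 1, p => (p 0).bind fun b => (pmfPi fun i => p i.succ).bind fun f => PMF.pure (Fin.cons b f)

def iidPMF {Z : Type*} (D : PMF Z) (m : ℕ) : PMF (Fin m → Z) := pmfPi fun _ => D

def pr {α : Type*} (p : PMF α) (s : Set α) : ℝ≥0∞ := p.toOuterMeasure s

def errD {X : Type*} (D : PMF (X × Bool)) (h : X → Bool) : ℝ≥0∞ := pr D {z | h z.1 ≠ z.2}

def Realizable {X : Type*} (C : Set (X → Bool)) (D : PMF (X × Bool)) : Prop :=
  ∃ f ∈ C, errD D f = 0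

/-- neighboring fixed-size datasets: the entire data of (at most) one user is changed -/
def FnNeighbor {n : ℕ} {A : Type*} (u u' : Fin n → A) : Prop :=
  ∃ i, ∀ j, j ≠ i → u j = u' j

/-- (ε,δ)-DP for mechanisms on fixed-size datasets. -/
def DPfn {n : ℕ} {A O : Type*} (M : (Fin n → A) → PMF O) (ε δ : ℝ) : Prop :=
  ∀ u u', FnNeighbor u u' → ∀ S : Set O,
    pr (M u) S ≤ ENNReal.ofReal (Real.exp ε) * pr (M u') S + ENNReal.ofReal δ

/-- `A` is an m-sample (α,β)-accurate (η,ν)-pseudo-globally stable learner for `C`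
with public randomness `ρ`. -/
def PGStable {X R : Type*} (m : ℕ) (α β η ν : ℝ) (C : Set (X → Bool))
    (ρ : PMF R) (A : (Fin m → X × Bool) → R → PMF (X → Bool)) : Prop :=
  ∀ D : PMF (X × Bool), Realizable C D →
    ∃ hr : R → (X → Bool),
      pr ρ {r | errD D (hr r) ≤ ENNReal.ofReal α} ≥ ENNReal.ofReal (1 - β) ∧
      pr ρ {r | pr ((iidPMF D m).bind fun S => A S r) {h | h = hr r} ≥ ENNReal.ofReal η}
        ≥ ENNReal.ofReal ν

/-!
Fix the public string `r`. Each user runs the pseudo-globally stable learner on their own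
samples; for all but a `2β/3` fraction of the strings `r`, each user outputs the canonical
accurate hypothesis `h_r` with probability at least `0.9`, so by a Chernoff bound more than two
thirds of the `n` votes go to `h_r`, except with probability `0.9 ^ n`.

The votes are aggregated privately: a strict-majority hypothesis with `k` votes is released with
probability `F (k - (n / 2 + 1 + log (1/δ) / ε))`, where `F` is the Laplace CDF of scale `1/ε`,
and a fixed default hypothesis otherwise. Changing one user's data moves every vote count by at
most one, which changes `F` and `1 - F` by a factor at most `e^ε`; the majority itself can only
change when its count is at most `n / 2 + 1`, where the release probability is below `δ / 2`.
Once `ε n ≳ log (1/(δβ))`, a count above `2n/3` is released with probability `1 - O(β)`.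
-/

open scoped NNReal

section DiscreteProbability

variable {γ γ' : Type*}

lemma pr_bind (p : PMF γ) (f : γ → PMF γ') (S : Set γ') :
    pr (p.bind f) S = ∑' a, p a * pr (f a) S :=
  PMF.toOuterMeasure_bind_apply p f S

lemma pr_pure (a : γ) (S : Set γ) : pr (PMF.pure a) S = S.indicator 1 a := by
  by_cases ha : a ∈ S <;> simp [pr, PMF.toOuterMeasure_pure_apply, ha]

lemma pr_mono (p : PMF γ) {S T : Set γ} (h : S ⊆ T) : pr p S ≤ pr p T :=
  MeasureTheory.measure_mono h

lemma pr_union_le (p : PMF γ) (S T : Set γ) : pr p (S ∪ T) ≤ pr p S + pr p T :=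
  MeasureTheory.measure_union_le S T

lemma pr_le_one (p : PMF γ) (S : Set γ) : pr p S ≤ 1 :=
  (pr_mono p (Set.subset_univ S)).trans_eq
    ((p.toOuterMeasure_apply_eq_one_iff _).2 (Set.subset_univ _))

lemma pr_add_pr_compl (p : PMF γ) (S : Set γ) : pr p S + pr p Sᶜ = 1 := by
  rw [pr, pr, PMF.toOuterMeasure_apply, PMF.toOuterMeasure_apply, ← ENNReal.tsum_add]
  simp only [Set.indicator_self_add_compl_apply, p.tsum_coe]

lemma pr_compl (p : PMF γ) (S : Set γ) : pr p Sᶜ = 1 - pr p S :=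
  ENNReal.eq_sub_of_add_eq (ne_top_of_le_ne_top ENNReal.one_ne_top (pr_le_one p S))
    ((add_comm _ _).trans (pr_add_pr_compl p S))

lemma pr_compl_le_of_le_pr {p : PMF γ} {S : Set γ} {b : ℝ}
    (h : ENNReal.ofReal (1 - b) ≤ pr p S) : pr p Sᶜ ≤ ENNReal.ofReal b := by
  rw [pr_compl, tsub_le_iff_right]
  calc (1 : ℝ≥0∞) = ENNReal.ofReal (b + (1 - b)) := by simp
    _ ≤ ENNReal.ofReal b + ENNReal.ofReal (1 - b) := ENNReal.ofReal_add_le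
    _ ≤ ENNReal.ofReal b + pr p S := by gcongr

lemma le_pr_of_pr_compl_le {p : PMF γ} {S : Set γ} {b : ℝ} (hb : 0 ≤ b)
    (h : pr p Sᶜ ≤ ENNReal.ofReal b) : ENNReal.ofReal (1 - b) ≤ pr p S := by
  rw [← compl_compl S, pr_compl, ENNReal.ofReal_sub _ hb, ENNReal.ofReal_one]
  exact tsub_le_tsub_left h 1

lemma pr_bind_le_of_forall {p : PMF γ} {f g : γ → PMF γ'} {S : Set γ'} {E D : ℝ≥0∞}
    (h : ∀ a, pr (f a) S ≤ E * pr (g a) S + D) :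
    pr (p.bind f) S ≤ E * pr (p.bind g) S + D := by
  rw [pr_bind, pr_bind]
  calc ∑' a, p a * pr (f a) S ≤ ∑' a, (E * (p a * pr (g a) S) + D * p a) :=
        ENNReal.tsum_le_tsum fun a => (mul_le_mul_right (h a) _).trans_eq (by ring)
    _ = E * ∑' a, p a * pr (g a) S + D := by
        rw [ENNReal.tsum_add, ENNReal.tsum_mul_left, ENNReal.tsum_mul_left, p.tsum_coe, mul_one]

lemma pr_bind_le_of_forall_forall {p q : PMF γ} {f g : γ → PMF γ'} {S : Set γ'} {E D : ℝ≥0∞}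
    (h : ∀ a b, pr (f a) S ≤ E * pr (g b) S + D) :
    pr (p.bind f) S ≤ E * pr (q.bind g) S + D := by
  have hq (a : γ) : pr (f a) S ≤ E * pr (q.bind g) S + D := by
    simpa only [PMF.bind_const] using pr_bind_le_of_forall (p := q) (f := fun _ => f a) (h a)
  simpa only [PMF.bind_const] using pr_bind_le_of_forall (p := p) (g := fun _ => q.bind g) hq

lemma pr_bind_le_pr_compl_add {p : PMF γ} {f : γ → PMF γ'} {G : Set γ} {S : Set γ'}
    {b : ℝ≥0∞} (h : ∀ a ∈ G, pr (f a) S ≤ b) : pr (p.bind f) S ≤ pr p Gᶜ + b := by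
  rw [pr_bind, pr, PMF.toOuterMeasure_apply, ← one_mul b, ← p.tsum_coe, ← ENNReal.tsum_mul_right,
    ← ENNReal.tsum_add]
  refine ENNReal.tsum_le_tsum fun a => ?_
  by_cases ha : a ∈ G
  · simpa [ha] using mul_le_mul_right (h a ha) (p a)
  · simpa [ha] using le_add_right (mul_le_of_le_one_right' (pr_le_one (f a) S))

def expect (p : PMF γ) (g : γ → ℝ≥0∞) : ℝ≥0∞ := ∑' x, p x * g x

lemma expect_pure (a : γ) (g : γ → ℝ≥0∞) : expect (PMF.pure a) g = g a := by
  simp [expect, PMF.pure_apply]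

lemma expect_bind (p : PMF γ) (f : γ → PMF γ') (g : γ' → ℝ≥0∞) :
    expect (p.bind f) g = expect p fun a => expect (f a) g := by
  simp only [expect, PMF.bind_apply, ← ENNReal.tsum_mul_right, ← ENNReal.tsum_mul_left, mul_assoc]
  exact ENNReal.tsum_comm

lemma expect_mul_const (p : PMF γ) (g : γ → ℝ≥0∞) (c : ℝ≥0∞) :
    expect p (fun x => g x * c) = expect p g * c := by
  simp only [expect, ← mul_assoc, ENNReal.tsum_mul_right]

lemma expect_const_mul (p : PMF γ) (g : γ → ℝ≥0∞) (c : ℝ≥0∞) :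
    expect p (fun x => c * g x) = c * expect p g := by
  simp only [mul_comm c, expect_mul_const]

lemma mul_pr_le_expect (p : PMF γ) (g : γ → ℝ≥0∞) (a : ℝ≥0∞) :
    a * pr p {x | a ≤ g x} ≤ expect p g := by
  rw [pr, PMF.toOuterMeasure_apply, ← ENNReal.tsum_mul_left]
  refine ENNReal.tsum_le_tsum fun x => ?_
  by_cases hx : a ≤ g x
  · simpa [hx, mul_comm] using mul_le_mul_right hx (p x)
  · simp [hx]

end DiscreteProbability

section ProductDistribution

variable {γ γ' : Type*}

lemma pmfPi_succ_bind {n : ℕ} (p : Fin (n + 1) → PMF γ) (Φ : (Fin (n + 1) → γ) → PMF γ') :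
    (pmfPi p).bind Φ =
      (p 0).bind fun b => (pmfPi fun i => p i.succ).bind fun f => Φ (Fin.cons b f) := by
  simp only [pmfPi, PMF.bind_bind, PMF.pure_bind]

lemma expect_pmfPi_prod : ∀ {n : ℕ} (p : Fin n → PMF γ) (w : Fin n → γ → ℝ≥0∞),
    expect (pmfPi p) (fun f => ∏ i, w i (f i)) = ∏ i, expect (p i) (w i)
  | 0, p, w => by simp [pmfPi, expect_pure]
  | n + 1, p, w => by
    have hcons (b : γ) (f : Fin n → γ) :
        ∏ i, w i (Fin.cons (α := fun _ => γ) b f i) = w 0 b * ∏ j : Fin n, w j.succ (f j) := by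
      simp [Fin.prod_univ_succ]
    rw [← PMF.bind_pure (pmfPi p), pmfPi_succ_bind, Fin.prod_univ_succ,
      ← expect_pmfPi_prod (fun j => p j.succ) (fun j => w j.succ), ← expect_mul_const]
    simp only [expect_bind, expect_pure, hcons, expect_const_mul]

lemma pmfPi_bind_pmfPi : ∀ {n : ℕ} (p : Fin n → PMF γ) (κ : Fin n → γ → PMF γ'),
    (pmfPi p).bind (fun u => pmfPi fun i => κ i (u i)) = pmfPi fun i => (p i).bind (κ i)
  | 0, p, κ => by simp [pmfPi]
  | n + 1, p, κ => by
    rw [pmfPi_succ_bind]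
    conv_rhs => rw [← PMF.bind_pure (pmfPi _), pmfPi_succ_bind,
      ← pmfPi_bind_pmfPi (fun j => p j.succ) (fun j => κ j.succ)]
    simp only [PMF.bind_bind]
    refine congrArg _ (funext fun b => ?_)
    rw [PMF.bind_comm]
    refine congrArg _ (funext fun f => ?_)
    rw [← PMF.bind_pure (pmfPi _), pmfPi_succ_bind]
    simp

lemma FnNeighbor.symm {n : ℕ} {A : Type*} {u u' : Fin n → A} (h : FnNeighbor u u') :
    FnNeighbor u' u :=
  let ⟨i, hi⟩ := h; ⟨i, fun j hj => (hi j hj).symm⟩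

lemma pr_pmfPi_bind_le_of_fnNeighbor : ∀ {n : ℕ} {p q : Fin n → PMF γ}
    {Φ : (Fin n → γ) → PMF γ'} {S : Set γ'} {E D : ℝ≥0∞}, FnNeighbor p q →
    (∀ c c', FnNeighbor c c' → pr (Φ c) S ≤ E * pr (Φ c') S + D) →
    pr ((pmfPi p).bind Φ) S ≤ E * pr ((pmfPi q).bind Φ) S + D
  | 0, _, _, _, _, _, _, ⟨i, _⟩, _ => i.elim0
  | n + 1, p, q, Φ, S, E, D, ⟨i, hi⟩, hΦ => by
    rw [pmfPi_succ_bind, pmfPi_succ_bind]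
    cases i using Fin.cases with
    | zero =>
      have htail : (fun j : Fin n => p j.succ) = fun j => q j.succ :=
        funext fun j => hi _ (Fin.succ_ne_zero j)
      rw [htail]
      refine pr_bind_le_of_forall_forall fun b b' =>
        pr_bind_le_of_forall fun f => hΦ _ _ ⟨0, fun j hj => ?_⟩
      obtain ⟨j, rfl⟩ := Fin.exists_succ_eq.2 hj
      simp
    | succ i =>
      rw [hi 0 (Fin.succ_ne_zero i).symm]
      refine pr_bind_le_of_forall fun b => pr_pmfPi_bind_le_of_fnNeighbor
        ⟨i, fun j hj => hi _ ((Fin.succ_injective _).ne hj)⟩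
        fun c c' ⟨k, hk⟩ => hΦ _ _ ⟨k.succ, fun j hj => ?_⟩
      cases j using Fin.cases with
      | zero => simp
      | succ j => simpa using hk j fun h => hj (h ▸ rfl)

end ProductDistribution

section Majority

variable {Y : Type*} [DecidableEq Y] {n : ℕ}

def voteCount (c : Fin n → Y) (y : Y) : ℕ := (Finset.univ.filter fun i => c i = y).card

lemma voteCount_add_voteCount_le (c : Fin n → Y) {y y' : Y} (hne : y ≠ y') :
    voteCount c y + voteCount c y' ≤ n := by
  unfold voteCount
  rw [← Finset.card_union_of_disjoint
    (Finset.disjoint_filter.2 fun i _ (h : c i = y) h' => hne (h ▸ h'))]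
  exact (Finset.card_le_univ _).trans_eq (Fintype.card_fin n)

lemma voteCount_le_voteCount_add_one {c c' : Fin n → Y} (h : FnNeighbor c c') (y : Y) :
    voteCount c y ≤ voteCount c' y + 1 := by
  obtain ⟨i, hi⟩ := h
  refine (Finset.card_le_card fun j hj => ?_).trans (Finset.card_insert_le i _)
  by_cases hji : j = i
  · simp [hji]
  · simp_all

open Classical in
def majority (c : Fin n → Y) : Option Y :=
  if h : ∃ y, n < 2 * voteCount c y then some h.choose else none

lemma majority_eq_some_iff {c : Fin n → Y} {y : Y} :
    majority c = some y ↔ n < 2 * voteCount c y := by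
  unfold majority
  split_ifs with h
  · rw [Option.some_inj]
    refine ⟨fun hy => hy ▸ h.choose_spec, fun hy => by_contra fun hne => ?_⟩
    have := voteCount_add_voteCount_le c hne
    have := h.choose_spec
    omega
  · simpa using fun hy => h ⟨y, hy⟩

lemma prod_ite_eq_pow_sub_voteCount {M : Type*} [CommMonoid M] (c : Fin n → Y) (y : Y) (a : M) :
    ∏ i, (if c i = y then 1 else a) = a ^ (n - voteCount c y) := by
  rw [Finset.prod_ite, Finset.prod_const_one, Finset.prod_const, one_mul, voteCount]
  congr 1
  have := Finset.card_filter_add_card_filter_not (s := Finset.univ) (fun i => c i = y)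
  rw [Finset.card_univ, Fintype.card_fin] at this
  omega

lemma expect_ite_le (μ : PMF Y) (y : Y) (a : ℝ≥0∞) :
    expect μ (fun y' => if y' = y then 1 else a) ≤ 1 + a * pr μ {y}ᶜ := by
  have hsplit : expect μ (fun y' => if y' = y then 1 else a) = pr μ {y} + a * pr μ {y}ᶜ := by
    rw [pr, pr, PMF.toOuterMeasure_apply, PMF.toOuterMeasure_apply, ← ENNReal.tsum_mul_left,
      ← ENNReal.tsum_add]
    refine tsum_congr fun y' => ?_
    by_cases hy : y' = y <;> simp [hy, mul_comm]
  rw [hsplit]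
  gcongr
  exact pr_le_one μ _

lemma pr_pmfPi_three_mul_voteCount_le {μ : PMF Y} {y : Y} {p : ℝ} (hp : 0 ≤ p)
    (hμ : pr μ {y}ᶜ ≤ ENNReal.ofReal p) :
    pr (pmfPi fun _ : Fin n => μ) {c | 3 * voteCount c y ≤ 2 * n}
      ≤ ENNReal.ofReal (((1 + 8 * p) / 2) ^ n) := by
  set w : Y → ℝ≥0∞ := fun y' => if y' = y then 1 else 8
  have hbad : {c : Fin n → Y | 3 * voteCount c y ≤ 2 * n} ⊆ {c | 2 ^ n ≤ ∏ i, w (c i)} := by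
    intro c (hc : 3 * voteCount c y ≤ 2 * n)
    show 2 ^ n ≤ ∏ i, w (c i)
    calc (2 : ℝ≥0∞) ^ n ≤ 2 ^ (3 * (n - voteCount c y)) := pow_le_pow_right₀ one_le_two (by omega)
      _ = ∏ i, w (c i) := by rw [prod_ite_eq_pow_sub_voteCount, pow_mul]; norm_num
  have hmarkov : 2 ^ n * pr (pmfPi fun _ : Fin n => μ) {c | 3 * voteCount c y ≤ 2 * n}
      ≤ ENNReal.ofReal (1 + 8 * p) ^ n :=
    calc _ ≤ 2 ^ n * pr (pmfPi fun _ : Fin n => μ) {c | 2 ^ n ≤ ∏ i, w (c i)} := by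
          gcongr; exact pr_mono _ hbad
      _ ≤ expect (pmfPi fun _ : Fin n => μ) (fun c => ∏ i, w (c i)) := mul_pr_le_expect _ _ _
      _ = expect μ w ^ n := by simp [expect_pmfPi_prod (fun _ : Fin n => μ) (fun _ => w)]
      _ ≤ (1 + 8 * ENNReal.ofReal p) ^ n := by gcongr; exact (expect_ite_le μ y 8).trans (by gcongr)
      _ = _ := by rw [ENNReal.ofReal_add zero_le_one (by positivity), ENNReal.ofReal_one,
                    ENNReal.ofReal_mul (by norm_num), ENNReal.ofReal_ofNat]
  rw [div_pow, ENNReal.ofReal_div_of_pos (by positivity), ENNReal.ofReal_pow (by positivity),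
    ENNReal.le_div_iff_mul_le (by simp) (by simp), mul_comm]
  simpa using hmarkov

end Majority

section LaplaceCDF

def laplaceCDF (ε : ℝ≥0) (x : ℝ) : ℝ :=
  if x ≤ 0 then Real.exp (ε * x) / 2 else 1 - Real.exp (-(ε * x)) / 2

variable (ε : ℝ≥0)

lemma laplaceCDF_neg (x : ℝ) : laplaceCDF ε (-x) = 1 - laplaceCDF ε x := by
  unfold laplaceCDF
  rcases lt_trichotomy x 0 with hx | rfl | hx
  · rw [if_neg (by linarith), if_pos hx.le]
    ring_nf
  · norm_num
  · rw [if_pos (by linarith), if_neg (not_le.2 hx)]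
    ring_nf

lemma laplaceCDF_le_exp (x : ℝ) : laplaceCDF ε x ≤ Real.exp (ε * x) / 2 := by
  unfold laplaceCDF
  split_ifs
  · rfl
  · have ht := Real.exp_pos (ε * x)
    rw [Real.exp_neg]
    nlinarith [mul_nonneg (sq_nonneg (Real.exp (ε * x) - 1)) (inv_nonneg.2 ht.le),
      mul_inv_cancel₀ ht.ne']

lemma one_sub_laplaceCDF_le (x : ℝ) : 1 - laplaceCDF ε x ≤ Real.exp (-(ε * x)) / 2 := by
  simpa [← laplaceCDF_neg] using laplaceCDF_le_exp ε (-x)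

lemma laplaceCDF_nonneg (x : ℝ) : 0 ≤ laplaceCDF ε x := by
  unfold laplaceCDF
  split_ifs with hx
  · positivity
  · have : Real.exp (-(ε * x)) ≤ 1 :=
      Real.exp_le_one_iff.2 (neg_nonpos.2 (mul_nonneg ε.coe_nonneg (le_of_not_ge hx)))
    linarith

lemma laplaceCDF_le_one (x : ℝ) : laplaceCDF ε x ≤ 1 := by
  linarith [laplaceCDF_neg ε x, laplaceCDF_nonneg ε (-x)]

lemma laplaceCDF_mono : Monotone (laplaceCDF ε) := by
  intro x y hxy
  have hεxy : (ε : ℝ) * x ≤ ε * y := mul_le_mul_of_nonneg_left hxy ε.coe_nonneg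
  unfold laplaceCDF
  split_ifs with hx hy hy
  · gcongr
  · have := Real.exp_le_one_iff.2 (mul_nonpos_of_nonneg_of_nonpos ε.coe_nonneg hx)
    have := Real.exp_le_one_iff.2 (neg_nonpos.2 (mul_nonneg ε.coe_nonneg (le_of_not_ge hy)))
    linarith
  · linarith
  · gcongr

lemma laplaceCDF_add_one_le (x : ℝ) :
    laplaceCDF ε (x + 1) ≤ Real.exp ε * laplaceCDF ε x := by
  by_cases hx : x ≤ 0
  · calc laplaceCDF ε (x + 1) ≤ Real.exp (ε * (x + 1)) / 2 := laplaceCDF_le_exp ε _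
      _ = Real.exp ε * laplaceCDF ε x := by
        rw [laplaceCDF, if_pos hx, mul_add, mul_one, Real.exp_add]
        ring
  · -- with `u = exp ε ≥ 1`, `b = exp (-ε x) ≤ 1` and `c = b / u`,
    -- the inequality is `(u - 1) (2 - c u - c) ≥ 0`
    have hx1 : ¬ x + 1 ≤ 0 := by linarith
    have hεx : 0 ≤ (ε : ℝ) * x := mul_nonneg ε.coe_nonneg (le_of_not_ge hx)
    have hu := Real.one_le_exp ε.coe_nonneg
    have hb : Real.exp (-(ε * x)) ≤ 1 := Real.exp_le_one_iff.2 (by linarith)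
    have hc : Real.exp (-(ε * (x + 1))) ≤ 1 :=
      Real.exp_le_one_iff.2 (by nlinarith [ε.coe_nonneg])
    have hcu : Real.exp (-(ε * (x + 1))) * Real.exp ε = Real.exp (-(ε * x)) := by
      rw [← Real.exp_add]; ring_nf
    rw [laplaceCDF, laplaceCDF, if_neg hx, if_neg hx1, ← hcu]
    nlinarith [mul_nonneg (sub_nonneg.2 hu) (show 0 ≤ 2 - Real.exp (-(ε * (x + 1))) * Real.exp ε
      - Real.exp (-(ε * (x + 1))) by linarith)]

lemma one_sub_laplaceCDF_le_mul (x : ℝ) :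
    1 - laplaceCDF ε x ≤ Real.exp ε * (1 - laplaceCDF ε (x + 1)) := by
  have h := laplaceCDF_add_one_le ε (-(x + 1))
  rwa [show -(x + 1) + 1 = -x by ring, laplaceCDF_neg, laplaceCDF_neg] at h

end LaplaceCDF

section TwoPoint

variable {Y : Type*}

def twoPoint (p : ℝ≥0∞) (hp : p ≤ 1) (a b : Y) : PMF Y :=
  (PMF.ofFintype (fun t : Bool => if t then p else 1 - p)
    (by simpa using add_tsub_cancel_of_le hp)).bind fun t => PMF.pure (if t then a else b)

variable {p : ℝ≥0∞} {hp : p ≤ 1} {a b : Y} {S : Set Y}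

lemma pr_twoPoint :
    pr (twoPoint p hp a b) S = p * S.indicator 1 a + (1 - p) * S.indicator 1 b := by
  simp [twoPoint, pr_bind, pr_pure]

lemma pr_twoPoint_le_add : pr (twoPoint p hp a b) S ≤ p + S.indicator 1 b := by
  rw [pr_twoPoint]
  gcongr
  · exact mul_le_of_le_one_right' (Set.indicator_le_self' (fun _ _ => zero_le_one) a)
  · exact mul_le_of_le_one_left' tsub_le_self

lemma indicator_le_pr_twoPoint_add : S.indicator 1 b ≤ pr (twoPoint p hp a b) S + p := by
  rw [pr_twoPoint]
  by_cases hb : b ∈ S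
  · simp only [Set.indicator_of_mem hb, Pi.one_apply, mul_one]
    calc (1 : ℝ≥0∞) = 1 - p + p := (tsub_add_cancel_of_le hp).symm
      _ ≤ _ := by gcongr; exact le_add_self
  · simp [Set.indicator_of_notMem hb]

lemma pr_twoPoint_le_mul {p' : ℝ≥0∞} {hp' : p' ≤ 1} {E : ℝ≥0∞} (h : p ≤ E * p')
    (h' : 1 - p ≤ E * (1 - p')) :
    pr (twoPoint p hp a b) S ≤ E * pr (twoPoint p' hp' a b) S := by
  rw [pr_twoPoint, pr_twoPoint]
  calc _ ≤ E * p' * S.indicator 1 a + E * (1 - p') * S.indicator 1 b := by gcongr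
    _ = _ := by ring

lemma pr_twoPoint_le_one_sub (ha : a ∉ S) : pr (twoPoint p hp a b) S ≤ 1 - p := by
  rw [pr_twoPoint, Set.indicator_of_notMem ha, mul_zero, zero_add]
  exact mul_le_of_le_one_right' (Set.indicator_le_self' (fun _ _ => zero_le_one) b)

end TwoPoint

section AcceptProb

variable {ε : ℝ≥0} {δ : ℝ} {n k k' : ℕ}

/-- The Laplace CDF is centred `log (1/δ) / ε` above `n / 2 + 1`, so that a vote count which
can lose its majority by changing one vote is accepted with probability at most `δ / 2`. -/
def acceptProb (ε : ℝ≥0) (δ : ℝ) (n k : ℕ) : ℝ≥0∞ :=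
  ENNReal.ofReal (laplaceCDF ε (k - (n / 2 + 1 + Real.log δ⁻¹ / ε)))

lemma acceptProb_le_one : acceptProb ε δ n k ≤ 1 :=
  ENNReal.ofReal_le_one.2 (laplaceCDF_le_one ε _)

lemma acceptProb_le_mul (hk : k ≤ k' + 1) :
    acceptProb ε δ n k ≤ ENNReal.ofReal (Real.exp ε) * acceptProb ε δ n k' := by
  rw [acceptProb, acceptProb, ← ENNReal.ofReal_mul (Real.exp_pos _).le]
  refine ENNReal.ofReal_le_ofReal ((laplaceCDF_mono ε ?_).trans (laplaceCDF_add_one_le ε _))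
  have : (k : ℝ) ≤ k' + 1 := by exact_mod_cast hk
  linarith

lemma one_sub_acceptProb_le_mul (hk : k' ≤ k + 1) :
    1 - acceptProb ε δ n k ≤ ENNReal.ofReal (Real.exp ε) * (1 - acceptProb ε δ n k') := by
  set T : ℝ := n / 2 + 1 + Real.log δ⁻¹ / ε
  have h := one_sub_laplaceCDF_le_mul ε (k' - T - 1)
  rw [sub_add_cancel] at h
  have hmono : laplaceCDF ε (k' - T - 1) ≤ laplaceCDF ε (k - T) := laplaceCDF_mono ε (by
    have : (k' : ℝ) ≤ k + 1 := by exact_mod_cast hk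
    linarith)
  rw [acceptProb, acceptProb, ← ENNReal.ofReal_one, ← ENNReal.ofReal_sub _ (laplaceCDF_nonneg ε _),
    ← ENNReal.ofReal_sub _ (laplaceCDF_nonneg ε _), ← ENNReal.ofReal_mul (Real.exp_pos _).le]
  exact ENNReal.ofReal_le_ofReal (by linarith)

lemma acceptProb_le_half (hε : 0 < ε) (hδ : 0 < δ) (hk : 2 * k ≤ n + 2) :
    acceptProb ε δ n k ≤ ENNReal.ofReal (δ / 2) := by
  refine ENNReal.ofReal_le_ofReal ((laplaceCDF_le_exp ε _).trans ?_)
  have hk' : (2 * k : ℝ) ≤ n + 2 := by exact_mod_cast hk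
  have hexp : (ε : ℝ) * (k - (n / 2 + 1 + Real.log δ⁻¹ / ε)) ≤ Real.log δ := by
    rw [mul_sub, mul_add, mul_div_cancel₀ _ (NNReal.coe_ne_zero.2 hε.ne'), Real.log_inv]
    nlinarith [ε.coe_nonneg]
  calc Real.exp (ε * (k - (n / 2 + 1 + Real.log δ⁻¹ / ε))) / 2 ≤ Real.exp (Real.log δ) / 2 := by
        gcongr
    _ = δ / 2 := by rw [Real.exp_log hδ]

lemma one_sub_acceptProb_le (hε : 0 < ε) {t : ℝ} (hk : 2 * n < 3 * k)
    (hn : 6 * (Real.log δ⁻¹ + t + ε) ≤ ε * n) :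
    1 - acceptProb ε δ n k ≤ ENNReal.ofReal (Real.exp (-t) / 2) := by
  rw [acceptProb, ← ENNReal.ofReal_one, ← ENNReal.ofReal_sub _ (laplaceCDF_nonneg ε _)]
  refine ENNReal.ofReal_le_ofReal ((one_sub_laplaceCDF_le ε _).trans ?_)
  have hk' : (2 * n : ℝ) < 3 * k := by exact_mod_cast hk
  have hexp : t ≤ (ε : ℝ) * (k - (n / 2 + 1 + Real.log δ⁻¹ / ε)) := by
    rw [mul_sub, mul_add, mul_div_cancel₀ _ (NNReal.coe_ne_zero.2 hε.ne')]
    nlinarith [ε.coe_nonneg]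
  gcongr

end AcceptProb

section StableSelect

variable {Y : Type*} [DecidableEq Y] {n : ℕ} {ε : ℝ≥0} {δ : ℝ} {y₀ : Y}

def stableSelect (ε : ℝ≥0) (δ : ℝ) (y₀ : Y) (c : Fin n → Y) : PMF Y :=
  match majority c with
  | some y => twoPoint (acceptProb ε δ n (voteCount c y)) acceptProb_le_one y y₀
  | none => PMF.pure y₀

lemma acceptProb_le_half_of_majority_ne (hε : 0 < ε) (hδ : 0 < δ) {c c' : Fin n → Y} {y : Y}
    (hcc : FnNeighbor c c') (hy : majority c = some y) (hne : majority c ≠ majority c') :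
    acceptProb ε δ n (voteCount c y) ≤ ENNReal.ofReal (δ / 2) := by
  have hc := majority_eq_some_iff.1 hy
  have hc' : ¬ n < 2 * voteCount c' y := fun h => hne (hy.trans (majority_eq_some_iff.2 h).symm)
  have := voteCount_le_voteCount_add_one hcc y
  exact acceptProb_le_half hε hδ (by omega)

lemma pr_stableSelect_le_of_majority_ne (hε : 0 < ε) (hδ : 0 < δ) {c c' : Fin n → Y}
    (hcc : FnNeighbor c c') (hne : majority c ≠ majority c') (S : Set Y) :
    pr (stableSelect ε δ y₀ c) S ≤ ENNReal.ofReal (δ / 2) + S.indicator 1 y₀ := by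
  cases hy : majority c with
  | none => simp [stableSelect, hy, pr_pure]
  | some y =>
    simp only [stableSelect, hy]
    exact pr_twoPoint_le_add.trans
      (add_le_add_left (acceptProb_le_half_of_majority_ne hε hδ hcc hy hne) _)

lemma indicator_le_pr_stableSelect_of_majority_ne (hε : 0 < ε) (hδ : 0 < δ) {c c' : Fin n → Y}
    (hcc : FnNeighbor c c') (hne : majority c ≠ majority c') (S : Set Y) :
    S.indicator 1 y₀ ≤ pr (stableSelect ε δ y₀ c) S + ENNReal.ofReal (δ / 2) := by
  cases hy : majority c with
  | none => simp [stableSelect, hy, pr_pure]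
  | some y =>
    simp only [stableSelect, hy]
    exact indicator_le_pr_twoPoint_add.trans
      (add_le_add_right (acceptProb_le_half_of_majority_ne hε hδ hcc hy hne) _)

lemma dp_stableSelect (hε : 0 < ε) (hδ : 0 < δ) :
    DPfn (stableSelect ε δ y₀ : (Fin n → Y) → PMF Y) ε δ := by
  intro c c' hcc S
  have hE : 1 ≤ ENNReal.ofReal (Real.exp ε) := ENNReal.one_le_ofReal.2 (Real.one_le_exp ε.2)
  by_cases hmaj : majority c = majority c'
  · refine le_add_right ?_
    cases hy : majority c with
    | none =>
      simp only [stableSelect, hy, ← hmaj]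
      exact le_mul_of_one_le_left' hE
    | some y =>
      simp only [stableSelect, hy, ← hmaj]
      exact pr_twoPoint_le_mul (acceptProb_le_mul (voteCount_le_voteCount_add_one hcc y))
        (one_sub_acceptProb_le_mul (voteCount_le_voteCount_add_one hcc.symm y))
  · calc pr (stableSelect ε δ y₀ c) S ≤ ENNReal.ofReal (δ / 2) + S.indicator 1 y₀ :=
          pr_stableSelect_le_of_majority_ne hε hδ hcc hmaj S
      _ ≤ ENNReal.ofReal (δ / 2) + (pr (stableSelect ε δ y₀ c') S + ENNReal.ofReal (δ / 2)) :=
          add_le_add_right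
            (indicator_le_pr_stableSelect_of_majority_ne hε hδ hcc.symm (Ne.symm hmaj) S) _
      _ = pr (stableSelect ε δ y₀ c') S + ENNReal.ofReal δ := by
          rw [add_left_comm, ← ENNReal.ofReal_add (by positivity) (by positivity),
            add_halves]
      _ ≤ _ := by gcongr; exact le_mul_of_one_le_left' hE

end StableSelect

lemma nine_tenths_pow_le {β : ℝ} {n : ℕ} (hβ : 0 < β) (hL : 9 / 10 ≤ Real.log β⁻¹)
    (hn : 100 * Real.log β⁻¹ ≤ n) : (9 / 10 : ℝ) ^ n ≤ β / 6 := by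
  have hlog6 : Real.log 6 ≤ 5 := by
    linarith [Real.log_le_sub_one_of_pos (show (0 : ℝ) < 6 by norm_num)]
  calc (9 / 10 : ℝ) ^ n ≤ Real.exp (-(1 / 10)) ^ n := by
        gcongr; linarith [Real.add_one_le_exp (-(1 / 10) : ℝ)]
    _ = Real.exp (-(n / 10)) := by rw [← Real.exp_nat_mul]; ring_nf
    _ ≤ Real.exp (Real.log β - Real.log 6) := by
        gcongr; rw [Real.log_inv] at hL hn; linarith
    _ = β / 6 := by rw [Real.exp_sub, Real.exp_log hβ, Real.exp_log (by norm_num)]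

lemma exp_neg_log_inv_add_two_le {β : ℝ} (hβ : 0 < β) :
    Real.exp (-(Real.log β⁻¹ + 2)) / 2 ≤ β / 6 := by
  have h2 : 3 ≤ Real.exp 2 := by linarith [Real.add_one_le_exp (2 : ℝ)]
  rw [neg_add, Real.exp_add, Real.exp_neg, Real.exp_log (inv_pos.2 hβ), inv_inv, Real.exp_neg]
  have : (Real.exp 2)⁻¹ ≤ 3⁻¹ := inv_anti₀ (by norm_num) h2
  nlinarith

section Aggregation

variable {Z R Y : Type*} [DecidableEq Y] {n : ℕ} {ε : ℝ≥0} {δ : ℝ} {y₀ : Y}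

def stableAggregate (ε : ℝ≥0) (δ : ℝ) (y₀ : Y) (ρ : PMF R) (A : Z → R → PMF Y)
    (u : Fin n → Z) : PMF Y :=
  ρ.bind fun r => (pmfPi fun i => A (u i) r).bind (stableSelect ε δ y₀)

lemma dp_stableAggregate (hε : 0 < ε) (hδ : 0 < δ) (ρ : PMF R) (A : Z → R → PMF Y) :
    DPfn (stableAggregate ε δ y₀ ρ A : (Fin n → Z) → PMF Y) ε δ := by
  rintro u u' ⟨i, hi⟩ S
  exact pr_bind_le_of_forall fun r => pr_pmfPi_bind_le_of_fnNeighbor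
    ⟨i, fun j hj => congrArg (A · r) (hi j hj)⟩ fun c c' hcc => dp_stableSelect hε hδ c c' hcc S

lemma iidPMF_bind_stableAggregate (ρ : PMF R) (A : Z → R → PMF Y) (P : PMF Z) :
    (iidPMF P n).bind (stableAggregate ε δ y₀ ρ A) =
      ρ.bind fun r => (iidPMF (P.bind fun z => A z r) n).bind (stableSelect ε δ y₀) := by
  change (pmfPi fun _ => P).bind (fun u => ρ.bind fun r =>
    (pmfPi fun i => A (u i) r).bind (stableSelect ε δ y₀)) = _
  rw [PMF.bind_comm]
  refine congrArg _ (funext fun r => ?_)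
  rw [← PMF.bind_bind, pmfPi_bind_pmfPi (fun _ => P) (fun _ z => A z r), iidPMF]

lemma pr_iidPMF_bind_stableSelect_compl_le (hε : 0 < ε) (hε1 : ε < 1) (hδ : 0 < δ) (hδ1 : δ < 1)
    {β : ℝ} (hβ : 0 < β) (hβ1 : β < 1 / 10)
    (hn : 100 * (Real.log δ⁻¹ + Real.log β⁻¹) ≤ ε * n) {μ : PMF Y} {y : Y}
    (hμ : pr μ {y}ᶜ ≤ ENNReal.ofReal (1 / 10)) {S : Set Y} (hy : y ∈ S) :
    pr ((iidPMF μ n).bind (stableSelect ε δ y₀)) Sᶜ ≤ ENNReal.ofReal (β / 3) := by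
  have hL : 9 / 10 ≤ Real.log β⁻¹ := by
    linarith [Real.one_sub_inv_le_log_of_pos (inv_pos.2 hβ), inv_inv β]
  have hLδ : 0 ≤ Real.log δ⁻¹ := Real.log_nonneg (one_le_inv₀ hδ |>.2 hδ1.le)
  have hεn : (ε : ℝ) * n ≤ n := mul_le_of_le_one_left n.cast_nonneg (by exact_mod_cast hε1.le)
  have hfew : pr (iidPMF μ n) {c | 3 * voteCount c y ≤ 2 * n} ≤ ENNReal.ofReal (β / 6) := by
    refine (pr_pmfPi_three_mul_voteCount_le (by norm_num) hμ).trans (ENNReal.ofReal_le_ofReal ?_)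
    rw [show (1 + 8 * (1 / 10 : ℝ)) / 2 = 9 / 10 by norm_num]
    exact nine_tenths_pow_le hβ hL (by linarith)
  have hsel : ∀ c ∈ {c : Fin n → Y | 3 * voteCount c y ≤ 2 * n}ᶜ,
      pr (stableSelect ε δ y₀ c) Sᶜ ≤ ENNReal.ofReal (β / 6) := by
    intro c hc
    replace hc : 2 * n < 3 * voteCount c y := by simpa using hc
    rw [stableSelect, (majority_eq_some_iff (y := y)).2 (by omega)]
    refine (pr_twoPoint_le_one_sub (Set.notMem_compl_iff.2 hy)).trans
      ((one_sub_acceptProb_le hε (t := Real.log β⁻¹ + 2) hc ?_).trans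
        (ENNReal.ofReal_le_ofReal (exp_neg_log_inv_add_two_le hβ)))
    have : (ε : ℝ) < 1 := by exact_mod_cast hε1
    nlinarith
  calc _ ≤ pr (iidPMF μ n) {c | 3 * voteCount c y ≤ 2 * n}ᶜᶜ + ENNReal.ofReal (β / 6) :=
        pr_bind_le_pr_compl_add hsel
    _ ≤ ENNReal.ofReal (β / 6) + ENNReal.ofReal (β / 6) := by rw [compl_compl]; gcongr
    _ = ENNReal.ofReal (β / 3) := by
        rw [← ENNReal.ofReal_add (by positivity) (by positivity)]; ring_nf

end Aggregation

lemma pr_stableAggregate_inaccurate_le {X R : Type*} [Fintype X] {C : Set (X → Bool)} {α β : ℝ}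
    {m n : ℕ} {ρ : PMF R} {A : (Fin m → X × Bool) → R → PMF (X → Bool)} {ε : ℝ≥0} {δ : ℝ}
    (hPG : PGStable m α (β / 3) 0.9 (1 - β / 3) C ρ A) (hε : 0 < ε) (hε1 : ε < 1)
    (hδ : 0 < δ) (hδ1 : δ < 1) (hβ : 0 < β) (hβ1 : β < 1 / 10)
    (hn : 100 * (Real.log δ⁻¹ + Real.log β⁻¹) ≤ ε * n) {D : PMF (X × Bool)} (hD : Realizable C D) :
    pr ((iidPMF (iidPMF D m) n).bind (stableAggregate ε δ (fun _ => false) ρ A))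
      {h | errD D h ≤ ENNReal.ofReal α}ᶜ ≤ ENNReal.ofReal β := by
  obtain ⟨hr, hacc, hstab⟩ := hPG D hD
  set μ : R → PMF (X → Bool) := fun r => (iidPMF D m).bind fun S => A S r
  set G := {r | errD D (hr r) ≤ ENNReal.ofReal α} ∩
    {r | pr (μ r) {h | h = hr r} ≥ ENNReal.ofReal 0.9}
  have hG : pr ρ Gᶜ ≤ ENNReal.ofReal (2 * β / 3) := by
    rw [Set.compl_inter]
    calc _ ≤ ENNReal.ofReal (β / 3) + ENNReal.ofReal (β / 3) :=
          (pr_union_le _ _ _).trans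
            (add_le_add (pr_compl_le_of_le_pr hacc) (pr_compl_le_of_le_pr hstab))
      _ = _ := by rw [← ENNReal.ofReal_add (by positivity) (by positivity)]; ring_nf
  have hgood : ∀ r ∈ G, pr ((iidPMF (μ r) n).bind (stableSelect ε δ fun _ => false))
      {h | errD D h ≤ ENNReal.ofReal α}ᶜ ≤ ENNReal.ofReal (β / 3) := by
    rintro r ⟨hr_acc, hr_stab⟩
    refine pr_iidPMF_bind_stableSelect_compl_le hε hε1 hδ hδ1 hβ hβ1 hn
      (pr_compl_le_of_le_pr ?_) hr_acc
    rw [← Set.ofPred_eq_eq_singleton]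
    convert hr_stab using 2
    norm_num
  rw [iidPMF_bind_stableAggregate]
  calc _ ≤ pr ρ Gᶜ + ENNReal.ofReal (β / 3) := pr_bind_le_pr_compl_add hgood
    _ ≤ ENNReal.ofReal (2 * β / 3) + ENNReal.ofReal (β / 3) := by gcongr
    _ = ENNReal.ofReal β := by rw [← ENNReal.ofReal_add (by positivity) (by positivity)]; ring_nf

/-- from a pseudo-globally stable learner to an (ε,δ)-DP user-level learner
in the central model with `⌈K·log(1/(δβ))/ε⌉` users. -/
theorem stmt11 :
    ∃ K : ℝ, 0 < K ∧
      ∀ (X : Type) [Fintype X] (C : Set (X → Bool)) (α β : ℝ),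
        α ∈ Set.Ioo (0 : ℝ) 0.1 → β ∈ Set.Ioo (0 : ℝ) 0.1 →
        ∀ (m : ℕ) (R : Type) (ρ : PMF R) (A : (Fin m → X × Bool) → R → PMF (X → Bool)),
          PGStable m α (β / 3) 0.9 (1 - β / 3) C ρ A →
          ∀ ε δ : ℝ, ε ∈ Set.Ioo (0 : ℝ) 1 → δ ∈ Set.Ioo (0 : ℝ) 1 →
          ∀ n : ℕ, n = ⌈K * Real.log (1 / (δ * β)) / ε⌉₊ →
          ∃ M : (Fin n → Fin m → X × Bool) → PMF (X → Bool),
            DPfn M ε δ ∧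
            ∀ D : PMF (X × Bool), Realizable C D →
              pr ((iidPMF (iidPMF D m) n).bind M)
                  {h | errD D h ≤ ENNReal.ofReal α} ≥ ENNReal.ofReal (1 - β) := by
  refine ⟨100, by norm_num, fun X _ C α β _ hβ m R ρ A hPG ε δ hε hδ n hn => ?_⟩
  lift ε to ℝ≥0 using hε.1.le
  replace hε : 0 < ε ∧ ε < 1 := ⟨NNReal.coe_pos.1 hε.1, NNReal.coe_lt_one.1 hε.2⟩
  have hsize : 100 * (Real.log δ⁻¹ + Real.log β⁻¹) ≤ ε * n := by
    rw [← Real.log_mul (inv_ne_zero hδ.1.ne') (inv_ne_zero hβ.1.ne'), ← mul_inv, mul_comm (ε : ℝ),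
      ← div_le_iff₀ (NNReal.coe_pos.2 hε.1), hn, ← one_div]
    exact Nat.le_ceil _
  refine ⟨stableAggregate ε δ (fun _ => false) ρ A, dp_stableAggregate hε.1 hδ.1 ρ A,
    fun D hD => le_pr_of_pr_compl_le hβ.1.le ?_⟩
  exact pr_stableAggregate_inaccurate_le hPG hε.1 hε.2 hδ.1 hδ.2 hβ.1
    (by norm_num at hβ ⊢; exact hβ.2) hsize hD
end
end

section
/- Let D be a distribution on X×Y with X finite and Y = {0,1}, let β ∈ (0, 0.1), α > 0, d ≥ 1, and let H be a fixed nonempty finite set of hypotheses X → Y with log₂|H| ≤ d. Let γ = 2(d + log(1/β) + 10)/α and m = ⌈10⁶·γ²·d·log(1/β)/β⁴⌉. Draw S ∼ D^m and define the distribution 𝒫_H on H with 𝒫_H(h) proportional to exp(−γ·Err_D(h)), and the (random) distribution 𝒫̂_{H,S} on H with 𝒫̂_{H,S}(h) proportional to exp(−γ·Err_S(h)). Then Pr_{S∼D^m}[d_TV(𝒫_H, 𝒫̂_{H,S}) ≤ β/10] ≥ 1 − β²/10. -/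
open scoped ENNReal Classical

noncomputable section

/-- empirical error of `h` on the sample tuple `S` -/
def errS {X : Type*} {m : ℕ} (S : Fin m → X × Bool) (h : X → Bool) : ℝ :=
  ((Finset.univ.filter fun i => h (S i).1 ≠ (S i).2).card : ℝ) / m

/-! Hoeffding's inequality and a union bound over the at most `2 ^ d` hypotheses show that,
except on an event of probability at most `2 ^ d · 2 exp (-2 m ε²) ≤ β² / 10`, every
empirical error is within `ε = β / (20 γ)` of the true one. On that event the exponents of
the two Gibbs distributions differ by at most `γ ε` on `H`, so each weight changes by a
factor of at most `exp (2 γ ε)` (one `exp (γ ε)` from the numerator, one from the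
normalising constant), and the total variation distance is at most
`(exp (2 γ ε) - 1) / 2 ≤ 2 γ ε = β / 10`. -/

open Finset MeasureTheory ProbabilityTheory Real
open scoped NNReal

section Product

variable {Z : Type*}

lemma pmfPi_apply {n : ℕ} (p : Fin n → PMF Z) (g : Fin n → Z) :
    pmfPi p g = ∏ i, p i (g i) := by
  induction n with
  | zero => simp [pmfPi, Subsingleton.elim g Fin.elim0]
  | succ n ih =>
    have hcons (b : Z) (f : Fin n → Z) : g = Fin.cons b f ↔ b = g 0 ∧ f = Fin.tail g := by
      constructor
      · rintro rfl; simp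
      · rintro ⟨rfl, rfl⟩; simp
    simp only [pmfPi, PMF.bind_apply, PMF.pure_apply, hcons, ite_and, mul_ite, mul_one, mul_zero]
    rw [tsum_eq_single (g 0) fun b hb => by simp [hb]]
    rw [tsum_eq_single (Fin.tail g) fun f hf => by simp [hf]]
    simp [ih, Fin.prod_univ_succ, Fin.tail]

lemma toMeasure_iidPMF [MeasurableSpace Z] [MeasurableSingletonClass Z] [Countable Z]
    (D : PMF Z) (m : ℕ) : (iidPMF D m).toMeasure = Measure.pi fun _ => D.toMeasure := by
  refine Measure.ext_of_singleton fun S => ?_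
  rw [PMF.toMeasure_apply_singleton _ _ (measurableSet_singleton S), Measure.pi_singleton,
    iidPMF, pmfPi_apply]
  simp [PMF.toMeasure_apply_singleton _ _ (measurableSet_singleton _)]

end Product

lemma ofReal_one_sub_le_pr {α : Type*} (p : PMF α) {s t : Set α} (hst : sᶜ ⊆ t) {δ : ℝ}
    (hδ : 0 ≤ δ) (hs : pr p s ≤ ENNReal.ofReal δ) : ENNReal.ofReal (1 - δ) ≤ pr p t := by
  let _ : MeasurableSpace α := ⊤
  simp only [pr, ← p.toMeasure_apply_eq_toOuterMeasure] at hs ⊢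
  calc ENNReal.ofReal (1 - δ) = 1 - ENNReal.ofReal δ := by
        rw [ENNReal.ofReal_sub _ hδ, ENNReal.ofReal_one]
    _ ≤ 1 - p.toMeasure s := tsub_le_tsub_left hs 1
    _ = p.toMeasure sᶜ := (prob_compl_eq_one_sub MeasurableSet.of_discrete).symm
    _ ≤ p.toMeasure t := measure_mono hst

section Hoeffding

variable {Z : Type*} [MeasurableSpace Z] {ν : Measure Z} [IsProbabilityMeasure ν]

lemma measureReal_pi_sum_sub_integral_ge_le {f : Z → ℝ} (hf : Measurable f) {a b : ℝ}
    (hab : ∀ z, f z ∈ Set.Icc a b) (m : ℕ) {t : ℝ} (ht : 0 ≤ t) :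
    (Measure.pi fun _ : Fin m => ν).real {S | t ≤ ∑ i, (f (S i) - ∫ z, f z ∂ν)}
      ≤ exp (-2 * t ^ 2 / (m * (b - a) ^ 2)) := by
  set μ := Measure.pi fun _ : Fin m => ν
  have hindep : iIndepFun (fun i (S : Fin m → Z) => f (S i) - ∫ z, f z ∂ν) μ :=
    iIndepFun_pi fun _ => (hf.sub_const _).aemeasurable
  have hsubG (i : Fin m) : HasSubgaussianMGF (fun S : Fin m → Z => f (S i) - ∫ z, f z ∂ν)
      ((‖b - a‖₊ / 2) ^ 2) μ := by
    have hmean : ∫ S, f (S i) ∂μ = ∫ z, f z ∂ν := by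
      rw [← (measurePreserving_eval (fun _ => ν) i).map_eq,
        integral_map (measurable_pi_apply i).aemeasurable hf.aestronglyMeasurable]
    rw [← hmean]
    exact hasSubgaussianMGF_of_mem_Icc (hf.comp (measurable_pi_apply i)).aemeasurable
      (ae_of_all _ fun S => hab (S i))
  refine (HasSubgaussianMGF.measure_sum_ge_le_of_iIndepFun hindep (fun i _ => hsubG i) ht
    ).trans_eq ?_
  have hvar :
      (2 * ∑ _i : Fin m, ((‖b - a‖₊ / 2) ^ 2 : ℝ≥0) : ℝ) = m * (b - a) ^ 2 / 2 := by
    simp only [sum_const, card_univ, Fintype.card_fin, nsmul_eq_mul]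
    push_cast
    rw [Real.norm_eq_abs, div_pow, sq_abs]
    ring
  rw [hvar, div_div_eq_mul_div]
  congr 1
  ring

lemma measureReal_pi_abs_freq_sub_ge_le (m : ℕ) {P : Z → Prop} [DecidablePred P]
    (hP : MeasurableSet {z | P z}) {ε : ℝ} (hε : 0 ≤ ε) :
    (Measure.pi fun _ : Fin m => ν).real
        {S | ε ≤ |(#{i | P (S i)} : ℝ) / m - ν.real {z | P z}|}
      ≤ 2 * exp (-2 * m * ε ^ 2) := by
  obtain rfl | hm := m.eq_zero_or_pos
  · simpa using measureReal_le_one.trans one_le_two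
  set f : Z → ℝ := {z | P z}.indicator 1
  have hf : Measurable f := measurable_one.indicator hP
  have hf01 (z : Z) : f z ∈ Set.Icc 0 1 := by by_cases h : P z <;> simp [f, h]
  have hnegf01 (z : Z) : -f z ∈ Set.Icc (-1) 0 :=
    ⟨neg_le_neg (hf01 z).2, neg_nonpos.2 (hf01 z).1⟩
  have hsum (S : Fin m → Z) : ∑ i, (f (S i) - ∫ z, f z ∂ν)
      = m * ((#{i | P (S i)} : ℝ) / m - ν.real {z | P z}) := by
    have hmean : ∫ z, f z ∂ν = ν.real {z | P z} := integral_indicator_one hP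
    rw [sum_sub_distrib, hmean]
    simp only [f, Set.indicator_apply, Set.mem_ofPred_eq, Pi.one_apply, sum_boole, sum_const,
      card_univ, Fintype.card_fin, nsmul_eq_mul]
    field_simp
  have hm' : (0 : ℝ) < m := Nat.cast_pos.2 hm
  have hmε : 0 ≤ m * ε := by positivity
  calc _ ≤ (Measure.pi fun _ : Fin m => ν).real
          ({S | m * ε ≤ ∑ i, (f (S i) - ∫ z, f z ∂ν)}
            ∪ {S | m * ε ≤ ∑ i, (-f (S i) - ∫ z, -f z ∂ν)}) := by
        refine measureReal_mono (fun S hS => ?_)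
        simp only [Set.mem_ofPred_eq, Set.mem_union, integral_neg, ← neg_sub', sum_neg_distrib,
          hsum, ← mul_neg] at hS ⊢
        exact (le_abs.1 hS).imp (mul_le_mul_of_nonneg_left · hm'.le)
          (mul_le_mul_of_nonneg_left · hm'.le)
    _ ≤ exp (-2 * (m * ε) ^ 2 / (m * (1 - 0) ^ 2))
          + exp (-2 * (m * ε) ^ 2 / (m * (0 - -1) ^ 2)) :=
        (measureReal_union_le _ _).trans (add_le_add
          (measureReal_pi_sum_sub_integral_ge_le hf hf01 m hmε)
          (measureReal_pi_sum_sub_integral_ge_le hf.neg hnegf01 m hmε))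
    _ = 2 * exp (-2 * m * ε ^ 2) := by
        rw [show (0 : ℝ) - -1 = 1 - 0 by norm_num,
          show -2 * (m * ε) ^ 2 / (m * (1 - 0) ^ 2) = -2 * m * ε ^ 2 by field_simp; ring]
        ring

end Hoeffding

lemma pr_iidPMF_exists_abs_errS_sub_errD_ge_le {X : Type*} [Countable X] (D : PMF (X × Bool))
    (H : Finset (X → Bool)) (m : ℕ) {ε : ℝ} (hε : 0 ≤ ε) :
    pr (iidPMF D m) {S | ∃ h ∈ H, ε ≤ |errS S h - (errD D h).toReal|}
      ≤ ENNReal.ofReal (#H * (2 * exp (-2 * m * ε ^ 2))) := by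
  let _ : MeasurableSpace (X × Bool) := ⊤
  have herrD (h : X → Bool) : (errD D h).toReal = D.toMeasure.real {z | h z.1 ≠ z.2} := by
    rw [errD, pr, ← PMF.toMeasure_apply_eq_toOuterMeasure]; rfl
  have hB : {S | ∃ h ∈ H, ε ≤ |errS S h - (errD D h).toReal|}
      = ⋃ h ∈ H, {S : Fin m → X × Bool | ε ≤ |errS S h - (errD D h).toReal|} := by
    ext S; simp only [Set.mem_ofPred_eq, Set.mem_iUnion, exists_prop]
  rw [pr, ← PMF.toMeasure_apply_eq_toOuterMeasure, toMeasure_iidPMF, ← ofReal_measureReal, hB]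
  refine ENNReal.ofReal_le_ofReal ((measureReal_biUnion_finset_le _ _).trans ?_)
  rw [← nsmul_eq_mul, ← sum_const]
  refine sum_le_sum fun h _ => ?_
  rw [herrD]
  exact measureReal_pi_abs_freq_sub_ge_le (P := fun z : X × Bool => h z.1 ≠ z.2) m
    MeasurableSet.of_discrete hε

section Gibbs

variable {ι : Type*} [DecidableEq ι] (H : Finset ι) (γ : ℝ)

def gibbs (f : ι → ℝ) (h : ι) : ℝ :=
  if h ∈ H then exp (-γ * f h) / ∑ h' ∈ H, exp (-γ * f h') else 0

variable {H γ}

lemma sum_gibbs_le_one [Fintype ι] (f : ι → ℝ) : ∑ h, gibbs H γ f h ≤ 1 := by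
  simp only [gibbs, sum_ite_mem, univ_inter, ← sum_div]
  exact div_self_le_one _

lemma gibbs_le_exp_mul_gibbs (hγ : 0 ≤ γ) {f g : ι → ℝ} {c : ℝ}
    (hfg : ∀ h ∈ H, |f h - g h| ≤ c) (h : ι) :
    gibbs H γ g h ≤ exp (2 * γ * c) * gibbs H γ f h := by
  by_cases hh : h ∈ H
  · have hnum (h' : ι) (hh' : h' ∈ H) :
        exp (-γ * g h') ≤ exp (γ * c) * exp (-γ * f h') := by
      rw [← exp_add, exp_le_exp]
      nlinarith [(abs_le.1 (hfg h' hh')).2]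
    have hden :
        exp (-γ * c) * ∑ h' ∈ H, exp (-γ * f h') ≤ ∑ h' ∈ H, exp (-γ * g h') := by
      rw [mul_sum]
      refine sum_le_sum fun h' hh' => ?_
      rw [← exp_add, exp_le_exp]
      nlinarith [(abs_le.1 (hfg h' hh')).1]
    have hpos : 0 < ∑ h' ∈ H, exp (-γ * f h') := sum_pos (fun _ _ => exp_pos _) ⟨h, hh⟩
    simp only [gibbs, if_pos hh]
    calc exp (-γ * g h) / ∑ h' ∈ H, exp (-γ * g h')
        ≤ exp (γ * c) * exp (-γ * f h) / (exp (-γ * c) * ∑ h' ∈ H, exp (-γ * f h')) :=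
          div_le_div₀ (by positivity) (hnum h hh) (by positivity) hden
      _ = exp (2 * γ * c) * (exp (-γ * f h) / ∑ h' ∈ H, exp (-γ * f h')) := by
          rw [show 2 * γ * c = γ * c - -γ * c by ring, exp_sub]
          field_simp
  · simp [gibbs, hh]

lemma abs_sub_le_of_le_exp_mul {a b x : ℝ} (hx : 0 ≤ x) (hab : a ≤ exp x * b)
    (hba : b ≤ exp x * a) : |a - b| ≤ (exp x - 1) * a := by
  have hex : 1 ≤ exp x := one_le_exp hx
  rw [abs_sub_le_iff]
  constructor
  · rcases le_total b a with h | h <;> nlinarith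
  · linarith

lemma sum_abs_gibbs_sub_le [Fintype ι] (hγ : 0 ≤ γ) {f g : ι → ℝ} {c : ℝ} (hc : 0 ≤ c)
    (hfg : ∀ h ∈ H, |f h - g h| ≤ c) :
    ∑ h, |gibbs H γ f h - gibbs H γ g h| ≤ exp (2 * γ * c) - 1 := by
  have hgf : ∀ h ∈ H, |g h - f h| ≤ c := fun h hh => abs_sub_comm (f h) (g h) ▸ hfg h hh
  have hexp : 0 ≤ exp (2 * γ * c) - 1 := by
    linarith [one_le_exp (by positivity : 0 ≤ 2 * γ * c)]
  calc ∑ h, |gibbs H γ f h - gibbs H γ g h|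
      ≤ ∑ h, (exp (2 * γ * c) - 1) * gibbs H γ f h :=
        sum_le_sum fun h _ => abs_sub_le_of_le_exp_mul (by positivity)
          (gibbs_le_exp_mul_gibbs hγ hgf h) (gibbs_le_exp_mul_gibbs hγ hfg h)
    _ ≤ exp (2 * γ * c) - 1 := by
        rw [← mul_sum]
        exact mul_le_of_le_one_right hexp (sum_gibbs_le_one f)

lemma half_sum_abs_gibbs_sub_le [Fintype ι] (hγ : 0 ≤ γ) {f g : ι → ℝ} {c : ℝ}
    (hc : 0 ≤ c) (hγc : 2 * γ * c ≤ 1) (hfg : ∀ h ∈ H, |f h - g h| ≤ c) :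
    1 / 2 * ∑ h, |gibbs H γ f h - gibbs H γ g h| ≤ 2 * γ * c := by
  have hexp : |exp (2 * γ * c) - 1| ≤ 2 * |2 * γ * c| :=
    abs_exp_sub_one_le (by rw [abs_of_nonneg (by positivity)]; exact hγc)
  rw [abs_of_nonneg (by positivity : 0 ≤ 2 * γ * c)] at hexp
  linarith [sum_abs_gibbs_sub_le hγ hc hfg, le_abs_self (exp (2 * γ * c) - 1)]

end Gibbs

lemma two_rpow_mul_exp_neg_le {β d K : ℝ} (hβ : 0 < β) (hd : 0 ≤ d)
    (hK : d + 2 * log (1 / β) + 3 ≤ K) :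
    2 ^ d * (2 * exp (-K)) ≤ β ^ 2 / 10 := by
  have h2d : (2 : ℝ) ^ d ≤ exp d := by
    rw [rpow_def_of_pos two_pos, exp_le_exp]
    nlinarith [log_two_lt_d9]
  have hβsq : exp (-(2 * log (1 / β))) = β ^ 2 := by
    rw [one_div, log_inv, show -(2 * -log β) = (2 : ℕ) * log β by push_cast; ring,
      exp_nat_mul, exp_log hβ]
  have he3 : 20 * exp (-3) ≤ 1 := by
    have h : exp 1 ^ 3 * exp (-3) = 1 := by
      rw [← exp_nat_mul, ← exp_add]; norm_num
    have he : 20 ≤ exp 1 ^ 3 :=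
      calc (20 : ℝ) ≤ 2.718 ^ 3 := by norm_num
        _ ≤ exp 1 ^ 3 := by gcongr; linarith [exp_one_gt_d9]
    nlinarith [exp_pos (-3)]
  calc 2 ^ d * (2 * exp (-K)) ≤ exp d * (2 * exp (-K)) := by gcongr
    _ = 2 * exp (d - K) := by rw [exp_sub, exp_neg]; ring
    _ ≤ 2 * exp (-(2 * log (1 / β)) + -3) := by gcongr; linarith
    _ = 2 * β ^ 2 * exp (-3) := by rw [exp_add, hβsq]; ring
    _ ≤ β ^ 2 / 10 := by nlinarith [sq_nonneg β]

lemma two_rpow_mul_exp_sampleSize_le {β γ d M : ℝ} (hβ0 : 0 < β) (hβ1 : β < 0.1)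
    (hγ : 0 < γ) (hd : 1 ≤ d) (hM : 10 ^ 6 * γ ^ 2 * d * log (1 / β) / β ^ 4 ≤ M) :
    2 ^ d * (2 * exp (-2 * M * (β / (20 * γ)) ^ 2)) ≤ β ^ 2 / 10 := by
  set L := log (1 / β)
  have hL : 1 ≤ L := by
    rw [le_log_iff_exp_le (by positivity), le_div_iff₀ hβ0]
    nlinarith [exp_one_lt_d9, exp_pos 1]
  have hML : 2500 * (d * L / β ^ 2) ≤ M * (β / (20 * γ)) ^ 2 := by
    calc 2500 * (d * L / β ^ 2) = 10 ^ 6 * γ ^ 2 * d * L / β ^ 4 * (β / (20 * γ)) ^ 2 := by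
          field_simp; ring
      _ ≤ M * (β / (20 * γ)) ^ 2 := by gcongr
  have hdL : d * L ≤ d * L / β ^ 2 := le_div_self (by positivity) (by positivity) (by nlinarith)
  have hd_le : d ≤ d * L := le_mul_of_one_le_right (by linarith) hL
  have hL_le : L ≤ d * L := le_mul_of_one_le_left (by linarith) hd
  rw [neg_mul, neg_mul]
  exact two_rpow_mul_exp_neg_le hβ0 (by linarith) (by linarith)

theorem stmt13_general {X : Type*} [Fintype X] [DecidableEq X] (D : PMF (X × Bool)) (β α d : ℝ)
    (hβ : β ∈ Set.Ioo (0 : ℝ) 0.1) (hα : 0 < α) (hd : 1 ≤ d)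
    (H : Finset (X → Bool)) (hcard : (H.card : ℝ) ≤ 2 ^ d)
    (γ : ℝ) (hγ : γ = 2 * (d + Real.log (1 / β) + 10) / α)
    (m : ℕ) (hm : m = ⌈10 ^ 6 * γ ^ 2 * d * Real.log (1 / β) / β ^ 4⌉₊)
    (PH : (X → Bool) → ℝ)
    (hPH : ∀ h, PH h =
      if h ∈ H then
        Real.exp (-γ * (errD D h).toReal) / ∑ h' ∈ H, Real.exp (-γ * (errD D h').toReal)
      else 0)
    (Phat : (Fin m → X × Bool) → (X → Bool) → ℝ)
    (hPhat : ∀ S h, Phat S h =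
      if h ∈ H then
        Real.exp (-γ * errS S h) / ∑ h' ∈ H, Real.exp (-γ * errS S h')
      else 0) :
    pr (iidPMF D m) {S | (1 / 2) * ∑ h, |PH h - Phat S h| ≤ β / 10}
      ≥ ENNReal.ofReal (1 - β ^ 2 / 10) := by
  obtain ⟨hβ0, hβ1⟩ := hβ
  have hL : 0 < log (1 / β) := log_pos (one_lt_one_div hβ0 (by linarith))
  have hγ0 : 0 < γ := hγ ▸ div_pos (by linarith) hα
  set ε := β / (20 * γ)
  have hε : 0 ≤ ε := by positivity
  have hγε : 2 * γ * ε = β / 10 := by simp only [ε]; field_simp; ring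
  refine ofReal_one_sub_le_pr _ (s := {S | ∃ h ∈ H, ε ≤ |errS S h - (errD D h).toReal|})
    (δ := β ^ 2 / 10) (fun S hS => ?_) (by positivity) ?_
  · have hclose (h : X → Bool) (hh : h ∈ H) : |(errD D h).toReal - errS S h| ≤ ε := by
      rw [abs_sub_comm]; exact le_of_not_ge fun hle => hS ⟨h, hh, hle⟩
    rw [Set.mem_ofPred_eq, show PH = gibbs H γ (fun h => (errD D h).toReal) from funext hPH,
      show Phat S = gibbs H γ (errS S) from funext (hPhat S), ← hγε]
    exact half_sum_abs_gibbs_sub_le hγ0.le hε (by linarith) hclose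
  · refine (pr_iidPMF_exists_abs_errS_sub_errD_ge_le D H m hε).trans (ENNReal.ofReal_le_ofReal ?_)
    calc #H * (2 * exp (-2 * m * ε ^ 2)) ≤ 2 ^ d * (2 * exp (-2 * m * ε ^ 2)) := by gcongr
      _ ≤ β ^ 2 / 10 :=
          two_rpow_mul_exp_sampleSize_le hβ0 hβ1 hγ0 hd (hm ▸ Nat.le_ceil _)

/-- with probability at least `1 − β²/10` over `S ∼ D^m`, the empirical
exponential-weights distribution on `H` is within total variation `β/10` of the
distributional one. -/
theorem stmt13 {X : Type*} [Fintype X] [DecidableEq X] (D : PMF (X × Bool)) (β α d : ℝ)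
    (hβ : β ∈ Set.Ioo (0 : ℝ) 0.1) (hα : 0 < α) (hd : 1 ≤ d)
    (H : Finset (X → Bool)) (hne : H.Nonempty) (hcard : (H.card : ℝ) ≤ 2 ^ d)
    (γ : ℝ) (hγ : γ = 2 * (d + Real.log (1 / β) + 10) / α)
    (m : ℕ) (hm : m = ⌈10 ^ 6 * γ ^ 2 * d * Real.log (1 / β) / β ^ 4⌉₊)
    (PH : (X → Bool) → ℝ)
    (hPH : ∀ h, PH h =
      if h ∈ H then
        Real.exp (-γ * (errD D h).toReal) / ∑ h' ∈ H, Real.exp (-γ * (errD D h').toReal)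
      else 0)
    (Phat : (Fin m → X × Bool) → (X → Bool) → ℝ)
    (hPhat : ∀ S h, Phat S h =
      if h ∈ H then
        Real.exp (-γ * errS S h) / ∑ h' ∈ H, Real.exp (-γ * errS S h')
      else 0) :
    pr (iidPMF D m) {S | (1 / 2) * ∑ h, |PH h - Phat S h| ≤ β / 10}
      ≥ ENNReal.ofReal (1 - β ^ 2 / 10) :=
  stmt13_general D β α d hβ hα hd H hcard γ hγ m hm PH hPH Phat hPhat

end
end
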